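/- arXiv:1204.4988 — 2 statements merged into one kernel-verified Lean document; each statement's English description precedes it below -/
import Mathlib

section
/- Let X, Y be SFTs and F a sliding-block code from X to Y. Then Y ⊆ F(X) if and only if every extensible pattern m of Y has a preimage pattern that is admissible for X, i.e., there exists an admissible pattern p of X (of the appropriate enlarged support) with F(p) = m. -/
open Filter Topology

/-- Positions: `ℤ^d`. -/
abbrev Zd (d : ℕ) : Type := Fin d → ℤ

/-- Configurations: maps `ℤ^d → A`. -/
abbrev Config (d : ℕ) (A : Type*) : Type _ := Zd d → A

/-- The block `[-r,r]^d` in `ℤ^d`. -/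
noncomputable def ball (d r : ℕ) : Finset (Zd d) :=
  Fintype.piFinset fun _ => Finset.Icc (-(r : ℤ)) (r : ℤ)

/-- A pattern: a finite support together with a symbol at each position. -/
structure Pattern (d : ℕ) (A : Type*) where
  supp : Finset (Zd d)
  val : Zd d → A

variable {d : ℕ} {A B : Type*}

/-- The pattern `p` occurs in the configuration `x` at position `z`. -/
def Pattern.OccursAt (p : Pattern d A) (x : Config d A) (z : Zd d) : Prop :=
  ∀ v ∈ p.supp, x (z + v) = p.val v

/-- The pattern `q` occurs inside the pattern `p` at position `z`. -/
def Pattern.OccursIn (q p : Pattern d A) (z : Zd d) : Prop :=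
  ∀ v ∈ q.supp, z + v ∈ p.supp ∧ p.val (z + v) = q.val v

/-- The subshift defined by the set `F` of forbidden patterns. -/
def xF (F : Set (Pattern d A)) : Set (Config d A) :=
  {x | ∀ z : Zd d, ∀ p ∈ F, ¬ p.OccursAt x z}

/-- A pattern is admissible if no forbidden pattern occurs inside it. -/
def Admissible (F : Set (Pattern d A)) (p : Pattern d A) : Prop :=
  ∀ z : Zd d, ∀ q ∈ F, ¬ q.OccursIn p z

/-- A pattern is extensible if it occurs in some configuration of the subshift. -/
def Extensible (F : Set (Pattern d A)) (p : Pattern d A) : Prop :=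
  ∃ x ∈ xF F, ∃ z : Zd d, p.OccursAt x z

/-- The shift map by `v`. -/
def shift (v : Zd d) (x : Config d A) : Config d A := fun z => x (z + v)

/-- `f` is a local rule of radius `r`: it only depends on coordinates in `[-r,r]^d`. -/
def IsLocal (r : ℕ) (f : Config d A → B) : Prop :=
  ∀ u u' : Config d A, (∀ v ∈ ball d r, u v = u' v) → f u = f u'

/-- The global sliding-block code induced by the local rule `f`. -/
def sliding (f : Config d A → B) : Config d A → Config d B :=
  fun x z => f fun v => x (z + v)

open scoped Pointwise

/-!
Forward direction: a preimage `x ∈ X` of a configuration of `Y` containing `m` yields, by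
restriction, an admissible preimage pattern of `m`. Converse: given `y ∈ Y`, take admissible
preimages `Pₙ` of the central blocks `y|[-n,n]^d`. Since the alphabet is finite, a limit point
`x` of the `Pₙ` along an ultrafilter agrees on every finite window with infinitely many `Pₙ`;
hence no forbidden pattern occurs in `x`, and `F(x) = y` because `f` has radius `r`.
-/

lemma eventually_mem_ball (z : Zd d) : ∀ᶠ n in atTop, z ∈ ball d n := by
  filter_upwards [eventually_ge_atTop (Finset.univ.sup fun i => (z i).natAbs)] with n hn
  simp only [ball, Fintype.mem_piFinset, Finset.mem_Icc]
  intro i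
  have : (z i).natAbs ≤ n :=
    (Finset.le_sup (f := fun i => (z i).natAbs) (Finset.mem_univ i)).trans hn
  omega

lemma zero_mem_ball (r : ℕ) : (0 : Zd d) ∈ ball d r := by
  simp [ball]

/-- Compactness of `A^ι` for a finite alphabet `A`. -/
lemma exists_frequently_eqOn_finset {ι : Type*} [Finite A] (g : ℕ → ι → A) :
    ∃ x : ι → A, ∀ S : Finset ι, ∃ᶠ n in atTop, ∀ i ∈ S, g n i = x i := by
  let U : Ultrafilter ℕ := Ultrafilter.of atTop
  have hx : ∀ i, ∃ a, ∀ᶠ n in (U : Filter ℕ), g n i = a := fun i =>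
    Ultrafilter.eventually_exists_iff.1 (Eventually.of_forall fun n => ⟨g n i, rfl⟩)
  choose x hx using hx
  refine ⟨x, fun S => ?_⟩
  exact ((eventually_all_finset S).2 fun i _ => hx i).frequently.filter_mono (Ultrafilter.of_le _)

lemma admissible_of_mem_xF {F : Set (Pattern d A)} {x : Config d A} (hx : x ∈ xF F)
    (S : Finset (Zd d)) (z : Zd d) : Admissible F ⟨S, fun v => x (z + v)⟩ := by
  intro w q hq hocc
  refine hx (z + w) q hq fun v hv => ?_
  simpa [add_assoc] using (hocc v hv).2

lemma exists_admissible_preimage_of_occursAt {FX : Set (Pattern d A)} {f : Config d A → B}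
    {x : Config d A} (hx : x ∈ xF FX) {m : Pattern d B} {z : Zd d}
    (hm : m.OccursAt (sliding f x) z) (r : ℕ) :
    ∃ p : Pattern d A, p.supp = m.supp + ball d r ∧ Admissible FX p ∧
      ∀ z' ∈ m.supp, f (fun v => p.val (z' + v)) = m.val z' := by
  refine ⟨⟨m.supp + ball d r, fun v => x (z + v)⟩, rfl, admissible_of_mem_xF hx _ z,
    fun z' hz' => ?_⟩
  rw [← hm z' hz']
  simp only [sliding, add_assoc]

lemma mem_image_sliding_of_forall_ball {FX : Set (Pattern d A)} [Finite A] {r : ℕ}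
    {f : Config d A → B} (hf : IsLocal r f) {y : Config d B}
    (hP : ∀ n : ℕ, ∃ p : Pattern d A, p.supp = ball d n + ball d r ∧ Admissible FX p ∧
      ∀ z ∈ ball d n, f (fun v => p.val (z + v)) = y z) :
    y ∈ sliding f '' xF FX := by
  choose P hPsupp hPadm hPy using hP
  obtain ⟨x, hx⟩ := exists_frequently_eqOn_finset fun n => (P n).val
  have exists_agreeing_index (S : Finset (Zd d)) :
      ∃ n, (∀ w ∈ S, (P n).val w = x w) ∧ ∀ w ∈ S, w ∈ ball d n :=
    ((hx S).and_eventually ((eventually_all_finset S).2 fun w _ => eventually_mem_ball w)).exists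
  refine ⟨x, fun z q hq hocc => ?_, funext fun z => ?_⟩
  · obtain ⟨n, hagree, hball⟩ := exists_agreeing_index (q.supp.image (z + ·))
    refine hPadm n z q hq fun v hv => ?_
    have hzv := Finset.mem_image_of_mem (z + ·) hv
    refine ⟨?_, (hagree _ hzv).trans (hocc v hv)⟩
    rw [hPsupp n]
    simpa using Finset.add_mem_add (hball _ hzv) (zero_mem_ball r)
  · obtain ⟨n, hagree, hball⟩ := exists_agreeing_index (insert z ((ball d r).image (z + ·)))
    rw [← hPy n z (hball z (Finset.mem_insert_self z _))]
    exact hf _ _ fun v hv =>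
      (hagree _ (Finset.mem_insert_of_mem (Finset.mem_image_of_mem _ hv))).symm

theorem stmt7_general (d : ℕ) (A B : Type) [Finite A]
    (FX : Set (Pattern d A))
    (FY : Set (Pattern d B))
    (r : ℕ) (f : Config d A → B) (hf : IsLocal r f) :
    xF FY ⊆ sliding f '' xF FX ↔
      ∀ m : Pattern d B, Extensible FY m →
        ∃ p : Pattern d A, p.supp = m.supp + ball d r ∧ Admissible FX p ∧
          ∀ z ∈ m.supp, f (fun v => p.val (z + v)) = m.val z := by
  constructor
  · rintro hsub m ⟨y, hy, z, hm⟩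
    obtain ⟨x, hx, rfl⟩ := hsub hy
    exact exists_admissible_preimage_of_occursAt hx hm r
  · intro H y hy
    refine mem_image_sliding_of_forall_ball hf fun n => H ⟨ball d n, y⟩ ?_
    exact ⟨y, hy, 0, by simp [Pattern.OccursAt]⟩

/-- `Y ⊆ F(X)` iff every extensible pattern of `Y` has an admissible preimage pattern
(with support enlarged by the radius `r`) under the local rule `f`. -/
theorem stmt7 (d : ℕ) (A B : Type) [Finite A] [Finite B]
    (FX : Set (Pattern d A)) (hFX : FX.Finite)
    (FY : Set (Pattern d B)) (hFY : FY.Finite)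
    (r : ℕ) (f : Config d A → B) (hf : IsLocal r f) :
    xF FY ⊆ sliding f '' xF FX ↔
      ∀ m : Pattern d B, Extensible FY m →
        ∃ p : Pattern d A, p.supp = m.supp + ball d r ∧ Admissible FX p ∧
          ∀ z ∈ m.supp, f (fun v => p.val (z + v)) = m.val z :=
  stmt7_general d A B FX FY r f hf
end

section
/- Let X be an SFT of radius r_X and F, G sliding-block codes with F : Σ_X^{ℤ^d} → Σ_Y^{ℤ^d} and G : Σ_Y^{ℤ^d} → Σ_X^{ℤ^d}. If for some k > r_{F'} + r_{G'} every admissible k-block b of X satisfies (G ∘ F)(b)(0) = b(0) in the star-tracking semantics (i.e., no forbidden pattern or star is encountered and the value at the origin is preserved), then G ∘ F restricted to X is the identity on X and F(X) ⊆ Y. Conversely, if there exists x ∈ X with (G∘F)(x) ≠ x or F(x) ∉ Y, then for every k there is an admissible k-block witnessing the failure at its center. -/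
open Filter Topology

variable {d : ℕ} {A B : Type*}

open Classical in
/-- The star-tracking version of a local rule: it applies `f` if its window of radius
`R` contains neither a `⋆` (i.e. `none`) nor a forbidden pattern of `F`, and outputs
`⋆` otherwise. -/
noncomputable def starMap [Inhabited A] (F : Set (Pattern d A)) (f : Config d A → B)
    (R : ℕ) : Config d (Option A) → Option B :=
  fun u =>
    if (∀ v ∈ ball d R, u v ≠ none) ∧
        (∀ z : Zd d, ∀ p ∈ F, ¬ ∀ v ∈ p.supp, z + v ∈ ball d R ∧ u (z + v) = some (p.val v))
    then some (f fun v => (u v).getD default)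
    else none

/-- Embed a `k`-block as a starred configuration: `⋆` outside the block. -/
noncomputable def starEmbed (k : ℕ) (b : Pattern d A) : Config d (Option A) :=
  fun v => if v ∈ ball d k then some (b.val v) else none

/-!
Every block of a configuration of `X` is admissible, and on the block of `x ∈ X` centred at
`z`, once `k` exceeds the sum of the two radii, the two star-tracking layers recompute
`F x` and then `G (F x)` at `z`, except that the second layer outputs `⋆` when its window
meets a forbidden pattern of `Y`. Hence a global failure at `z` is already witnessed by that
block, so no compactness argument is needed; for smaller `k` the windows leave the block and
the centre is `⋆` on every block.
-/

open scoped Pointwise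

lemma mem_ball {r : ℕ} {z : Zd d} : z ∈ ball d r ↔ ∀ i, z i ∈ Finset.Icc (-(r : ℤ)) r :=
  Fintype.mem_piFinset

lemma ball_mono {r s : ℕ} (h : r ≤ s) : ball d r ⊆ ball d s :=
  Fintype.piFinset_subset _ _ fun _ => Finset.Icc_subset_Icc (by omega) (by omega)

lemma ball_add_ball_subset {r s k : ℕ} (h : r + s ≤ k) : ball d r + ball d s ⊆ ball d k := by
  refine Finset.add_subset_iff.2 fun v hv w hw => mem_ball.2 fun i => ?_
  have hvi := Finset.mem_Icc.1 (mem_ball.1 hv i)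
  have hwi := Finset.mem_Icc.1 (mem_ball.1 hw i)
  rw [Pi.add_apply, Finset.mem_Icc]
  omega

lemma Pattern.occursAt_shift {p : Pattern d A} {x : Config d A} {z v : Zd d} :
    p.OccursAt (shift z x) v ↔ p.OccursAt x (v + z) := by
  simp only [Pattern.OccursAt, shift, add_right_comm]

lemma shift_mem_xF {F : Set (Pattern d A)} {x : Config d A} (hx : x ∈ xF F) (z : Zd d) :
    shift z x ∈ xF F :=
  fun v p hp hocc => hx (v + z) p hp (Pattern.occursAt_shift.1 hocc)

lemma sliding_apply (f : Config d A → B) (x : Config d A) (z : Zd d) :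
    sliding f x z = f (shift z x) :=
  congrArg f (funext fun v => congrArg x (add_comm z v))

lemma sliding_apply_zero (f : Config d A → B) (x : Config d A) : sliding f x 0 = f x := by
  simp [sliding]

lemma sliding_shift (f : Config d A → B) (x : Config d A) (z : Zd d) :
    sliding f (shift z x) = shift z (sliding f x) := by
  funext w
  simp only [sliding, shift, add_right_comm]

noncomputable def centralBlock (k : ℕ) (x : Config d A) : Pattern d A := ⟨ball d k, x⟩

lemma admissible_centralBlock {F : Set (Pattern d A)} {x : Config d A} (hx : x ∈ xF F)
    (k : ℕ) : Admissible F (centralBlock k x) :=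
  fun z q hq hocc => hx z q hq fun v hv => (hocc v hv).2

section StarMap

variable [Inhabited A] {F : Set (Pattern d A)} {f : Config d A → B} {R : ℕ}
  {u : Config d (Option A)} {x y : Config d A}

lemma starMap_eq_none_of_eq_none {v : Zd d} (hv : v ∈ ball d R) (hu : u v = none) :
    starMap F f R u = none :=
  if_neg fun h => h.1 v hv hu

lemma starMap_eq_some {r : ℕ} (hf : IsLocal r f) (hr : r ≤ R) (hy : y ∈ xF F)
    (hu : ∀ v ∈ ball d R, u v = some (y v)) : starMap F f R u = some (f y) := by
  have hnoStar : ∀ v ∈ ball d R, u v ≠ none := fun v hv => by simp [hu v hv]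
  have hnoForbidden : ∀ z : Zd d, ∀ p ∈ F,
      ¬ ∀ v ∈ p.supp, z + v ∈ ball d R ∧ u (z + v) = some (p.val v) := by
    intro z p hp hocc
    refine hy z p hp fun v hv => ?_
    obtain ⟨hzv, hval⟩ := hocc v hv
    simpa [hu _ hzv] using hval
  rw [starMap, if_pos ⟨hnoStar, hnoForbidden⟩]
  exact congrArg some (hf _ _ fun v hv => by simp [hu v (ball_mono hr hv)])

lemma starMap_eq_none_of_occursAt {p : Pattern d A} (hp : p ∈ F) (hpR : p.supp ⊆ ball d R)
    (hu : ∀ v ∈ ball d R, u v = some (y v)) (hocc : p.OccursAt y 0) :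
    starMap F f R u = none := by
  refine if_neg fun h => h.2 0 p hp fun v hv => ?_
  rw [zero_add]
  exact ⟨hpR hv, by rw [hu v (hpR hv), ← zero_add v, hocc v hv, zero_add]⟩

lemma sliding_starMap_starEmbed_centralBlock {r k : ℕ} (hf : IsLocal r f) (hr : r ≤ R)
    (hx : x ∈ xF F) {v : Zd d} (hv : ∀ w ∈ ball d R, v + w ∈ ball d k) :
    sliding (starMap F f R) (starEmbed k (centralBlock k x)) v = some (sliding f x v) := by
  rw [sliding_apply f]
  refine starMap_eq_some hf hr (shift_mem_xF hx v) fun w hw => ?_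
  simp only [starEmbed, centralBlock, if_pos (hv w hw), shift, add_comm]

end StarMap

section StarTest

variable [Inhabited A] [Inhabited B] (FX : Set (Pattern d A)) (FY : Set (Pattern d B))
  (f : Config d A → B) (g : Config d B → A) (R₁ R₂ k : ℕ)

noncomputable def starTest (b : Pattern d A) : Option A :=
  sliding (starMap FY g R₂) (sliding (starMap FX f R₁) (starEmbed k b)) 0

variable {FX FY f g R₁ R₂ k}

lemma starTest_eq_none_of_not_subset (hk : ¬ ball d R₂ + ball d R₁ ⊆ ball d k)
    (b : Pattern d A) : starTest FX FY f g R₁ R₂ k b = none := by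
  obtain ⟨_, hvw, hout⟩ := Finset.not_subset.1 hk
  obtain ⟨v, hv, w, hw, rfl⟩ := Finset.mem_add.1 hvw
  rw [starTest, sliding_apply_zero]
  refine starMap_eq_none_of_eq_none hv (starMap_eq_none_of_eq_none hw ?_)
  exact if_neg hout

variable {rF rG : ℕ} {x : Config d A}

lemma starTest_centralBlock (hf : IsLocal rF f) (hrF : rF ≤ R₁) (hg : IsLocal rG g)
    (hrG : rG ≤ R₂) (hk : ball d R₂ + ball d R₁ ⊆ ball d k) (hx : x ∈ xF FX)
    (hy : sliding f x ∈ xF FY) :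
    starTest FX FY f g R₁ R₂ k (centralBlock k x) = some (g (sliding f x)) := by
  rw [starTest, sliding_apply_zero]
  exact starMap_eq_some hg hrG hy fun v hv => sliding_starMap_starEmbed_centralBlock hf hrF hx
    fun w hw => hk (Finset.add_mem_add hv hw)

lemma starTest_centralBlock_eq_none (hf : IsLocal rF f) (hrF : rF ≤ R₁)
    (hk : ball d R₂ + ball d R₁ ⊆ ball d k) (hx : x ∈ xF FX) {p : Pattern d B} (hp : p ∈ FY)
    (hpR : p.supp ⊆ ball d R₂) (hocc : p.OccursAt (sliding f x) 0) :
    starTest FX FY f g R₁ R₂ k (centralBlock k x) = none := by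
  rw [starTest, sliding_apply_zero]
  exact starMap_eq_none_of_occursAt hp hpR (fun v hv =>
    sliding_starMap_starEmbed_centralBlock hf hrF hx fun w hw => hk (Finset.add_mem_add hv hw))
    hocc

lemma starTest_centralBlock_shift_eq_none (hf : IsLocal rF f) (hrF : rF ≤ R₁)
    (hk : ball d R₂ + ball d R₁ ⊆ ball d k) (hx : x ∈ xF FX) {p : Pattern d B} (hp : p ∈ FY)
    (hpR : p.supp ⊆ ball d R₂) {z : Zd d} (hocc : p.OccursAt (sliding f x) z) :
    starTest FX FY f g R₁ R₂ k (centralBlock k (shift z x)) = none :=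
  starTest_centralBlock_eq_none hf hrF hk (shift_mem_xF hx z) hp hpR
    (by rwa [sliding_shift, Pattern.occursAt_shift, zero_add])

lemma starTest_centralBlock_shift_eq_center_iff (hf : IsLocal rF f) (hrF : rF ≤ R₁)
    (hg : IsLocal rG g) (hrG : rG ≤ R₂) (hk : ball d R₂ + ball d R₁ ⊆ ball d k)
    (hx : x ∈ xF FX) (hy : sliding f x ∈ xF FY) (z : Zd d) :
    starTest FX FY f g R₁ R₂ k (centralBlock k (shift z x))
        = some ((centralBlock k (shift z x)).val 0) ↔ sliding g (sliding f x) z = x z := by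
  have hy' : sliding f (shift z x) ∈ xF FY := sliding_shift f x z ▸ shift_mem_xF hy z
  rw [starTest_centralBlock hf hrF hg hrG hk (shift_mem_xF hx z) hy', Option.some_inj,
    sliding_shift, ← sliding_apply_zero g, sliding_shift]
  simp [centralBlock, shift]

end StarTest

theorem stmt8_general (d : ℕ) (A B : Type) [Inhabited A] [Inhabited B]
    (FX : Set (Pattern d A)) (FY : Set (Pattern d B))
    (rX rY : ℕ) (hrY : ∀ q ∈ FY, q.supp ⊆ ball d rY)
    (rF : ℕ) (f : Config d A → B) (hf : IsLocal rF f)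
    (rG : ℕ) (g : Config d B → A) (hg : IsLocal rG g) :
    ((∃ k : ℕ, max rF rX + max rG rY < k ∧
        ∀ b : Pattern d A, b.supp = ball d k → Admissible FX b →
          sliding (starMap FY g (max rG rY))
              (sliding (starMap FX f (max rF rX)) (starEmbed k b)) 0
            = some (b.val 0)) →
      (∀ x ∈ xF FX, sliding g (sliding f x) = x) ∧ sliding f '' xF FX ⊆ xF FY) ∧
    ((∃ x ∈ xF FX, sliding g (sliding f x) ≠ x ∨ sliding f x ∉ xF FY) →
      ∀ k : ℕ, ∃ b : Pattern d A, b.supp = ball d k ∧ Admissible FX b ∧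
        sliding (starMap FY g (max rG rY))
            (sliding (starMap FX f (max rF rX)) (starEmbed k b)) 0
          ≠ some (b.val 0)) := by
  have hrF : rF ≤ max rF rX := le_max_left _ _
  have hrG : rG ≤ max rG rY := le_max_left _ _
  have hpR : ∀ q ∈ FY, q.supp ⊆ ball d (max rG rY) :=
    fun q hq => (hrY q hq).trans (ball_mono (le_max_right _ _))
  refine ⟨fun ⟨k, hk, hcheck⟩ => ?_, fun ⟨x, hx, hfail⟩ k => ?_⟩
  · have hk : ball d (max rG rY) + ball d (max rF rX) ⊆ ball d k :=
      ball_add_ball_subset (by omega)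
    have hcentre {x} (hx : x ∈ xF FX) (z : Zd d) :=
      hcheck _ rfl (admissible_centralBlock (shift_mem_xF hx z) k)
    have hY : ∀ x ∈ xF FX, sliding f x ∈ xF FY := fun x hx z p hp hocc =>
      Option.some_ne_none _ ((hcentre hx z).symm.trans
        (starTest_centralBlock_shift_eq_none hf hrF hk hx hp (hpR p hp) hocc))
    refine ⟨fun x hx => funext fun z => ?_, Set.image_subset_iff.2 hY⟩
    exact (starTest_centralBlock_shift_eq_center_iff hf hrF hg hrG hk hx (hY x hx) z).1
      (hcentre hx z)
  · by_cases hk : ball d (max rG rY) + ball d (max rF rX) ⊆ ball d k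
    · by_cases hy : sliding f x ∈ xF FY
      · obtain ⟨z, hz⟩ := Function.ne_iff.1 (hfail.resolve_right (not_not.2 hy))
        exact ⟨_, rfl, admissible_centralBlock (shift_mem_xF hx z) k,
          mt (starTest_centralBlock_shift_eq_center_iff hf hrF hg hrG hk hx hy z).1 hz⟩
      · obtain ⟨z, p, hp, hocc⟩ : ∃ z, ∃ p ∈ FY, p.OccursAt (sliding f x) z := by
          simpa [xF] using hy
        exact ⟨_, rfl, admissible_centralBlock (shift_mem_xF hx z) k,
          (starTest_centralBlock_shift_eq_none hf hrF hk hx hp (hpR p hp) hocc).trans_ne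
            (Option.some_ne_none _).symm⟩
    · exact ⟨_, rfl, admissible_centralBlock hx k,
        (starTest_eq_none_of_not_subset hk _).trans_ne (Option.some_ne_none _).symm⟩

/-- The star-tracking criterion for conjugacy-type checks: if for some
`k > r_{F'} + r_{G'}` every admissible `k`-block `b` of `X` satisfies
`(G' ∘ F')(b)(0) = b(0)`, then `G ∘ F` is the identity on `X` and `F(X) ⊆ Y`;
conversely, if this fails globally, then every size `k` admits an admissible
`k`-block witnessing the failure at its center. -/
theorem stmt8 (d : ℕ) (A B : Type) [Finite A] [Finite B] [Inhabited A] [Inhabited B]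
    (FX : Set (Pattern d A)) (hFX : FX.Finite) (FY : Set (Pattern d B)) (hFY : FY.Finite)
    (rX rY : ℕ) (hrX : ∀ p ∈ FX, p.supp ⊆ ball d rX) (hrY : ∀ q ∈ FY, q.supp ⊆ ball d rY)
    (rF : ℕ) (f : Config d A → B) (hf : IsLocal rF f)
    (rG : ℕ) (g : Config d B → A) (hg : IsLocal rG g) :
    ((∃ k : ℕ, max rF rX + max rG rY < k ∧
        ∀ b : Pattern d A, b.supp = ball d k → Admissible FX b →
          sliding (starMap FY g (max rG rY))
              (sliding (starMap FX f (max rF rX)) (starEmbed k b)) 0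
            = some (b.val 0)) →
      (∀ x ∈ xF FX, sliding g (sliding f x) = x) ∧ sliding f '' xF FX ⊆ xF FY) ∧
    ((∃ x ∈ xF FX, sliding g (sliding f x) ≠ x ∨ sliding f x ∉ xF FY) →
      ∀ k : ℕ, ∃ b : Pattern d A, b.supp = ball d k ∧ Admissible FX b ∧
        sliding (starMap FY g (max rG rY))
            (sliding (starMap FX f (max rF rX)) (starEmbed k b)) 0
          ≠ some (b.val 0)) :=
  stmt8_general d A B FX FY rX rY hrY rF f hf rG g hg
end
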